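/- Let k be a field of characteristic p, N a finite group, Z a normal p-subgroup of N, and U a projective indecomposable kN-module such that k ⊗_{kZ} U is a simple kN-module. Then the Z-fixed points U^Z equal the socle soc(U) of U as a kN-module, and in particular U^Z is a simple kN-module. -/

import Mathlib

open Representation

namespace PaperGrp

variable {O : Type*} [CommRing O] {G : Type*} [Group G]
variable {M M₂ : Type*} [AddCommGroup M] [Module O M] [AddCommGroup M₂] [Module O M₂]

/-- The submodule of fixed points of a subgroup `P` under a representation. -/
def fixedSub (ρ : Representation O G M) (P : Subgroup G) : Submodule O M where
  carrier := {m | ∀ g ∈ P, ρ g m = m}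
  add_mem' := fun ha hb g hg => by rw [map_add, ha g hg, hb g hg]
  zero_mem' := fun g hg => map_zero _
  smul_mem' := fun c m hm g hg => by rw [map_smul, hm g hg]

/-- The relative trace `Tr_Q^P(m) = ∑_{x ∈ P/Q} x • m` of a `Q`-fixed element. -/
noncomputable def relTrace (ρ : Representation O G M) (P Q : Subgroup G) (m : M)
    (hm : ∀ g ∈ Q, ρ g m = m) : M :=
  ∑ᶠ x : P ⧸ Q.subgroupOf P, Quotient.liftOn' x (fun g => ρ (g : G) m) (by
    intro a b hab
    rw [QuotientGroup.leftRel_apply] at hab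
    have h : ((a⁻¹ * b : ↥P) : G) ∈ Q := Subgroup.mem_subgroupOf.mp hab
    have hb : (b : G) = (a : G) * ((a⁻¹ * b : ↥P) : G) := by push_cast; group
    show ρ (a : G) m = ρ (b : G) m
    rw [hb, map_mul, Module.End.mul_apply, hm _ h])

/-- The submodule generated by relative traces from proper subgroups of `P`. -/
noncomputable def traceKer (ρ : Representation O G M) (P : Subgroup G) : Submodule O M :=
  Submodule.span O {x | ∃ Q : Subgroup G, Q < P ∧
    ∃ (m : M) (hm : ∀ g ∈ Q, ρ g m = m), x = relTrace ρ P Q m hm}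

/-- The kernel of the Brauer construction: relative traces together with `p·M^P`. -/
noncomputable def brauerKer (ρ : Representation O G M) (p : ℕ) (P : Subgroup G) :
    Submodule O (fixedSub ρ P) :=
  Submodule.comap (fixedSub ρ P).subtype (traceKer ρ P) ⊔ (Ideal.span {(p : O)}) • ⊤

/-- The Brauer construction `M(P) = M^P / (∑_{Q < P} Tr_Q^P M^Q + p M^P)`. -/
noncomputable abbrev BrauerQuot (ρ : Representation O G M) (p : ℕ) (P : Subgroup G) :=
  (fixedSub ρ P) ⧸ brauerKer ρ p P

variable [Finite G]

theorem map_relTrace (ρ : Representation O G M) (ρ₂ : Representation O G M₂)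
    (α : M →ₗ[O] M₂) (hα : ∀ (g : G) (m : M), α (ρ g m) = ρ₂ g (α m))
    (P Q : Subgroup G) (m : M) (hm : ∀ g ∈ Q, ρ g m = m) :
    α (relTrace ρ P Q m hm) = relTrace ρ₂ P Q (α m)
      (fun g hg => by rw [← hα, hm g hg]) := by
  unfold relTrace
  refine Eq.trans (α.toAddMonoidHom.map_finsum (Set.toFinite _)) ?_
  refine finsum_congr fun x => ?_
  induction x using Quotient.inductionOn' with
  | h g =>
      show α _ = _
      rw [Quotient.liftOn'_mk'', Quotient.liftOn'_mk'', hα]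

/-- The map induced by an equivariant map on Brauer constructions. -/
noncomputable def brauerMap (ρ : Representation O G M) (ρ₂ : Representation O G M₂)
    (α : M →ₗ[O] M₂) (hα : ∀ (g : G) (m : M), α (ρ g m) = ρ₂ g (α m))
    (p : ℕ) (P : Subgroup G) :
    BrauerQuot ρ p P →ₗ[O] BrauerQuot ρ₂ p P :=
  Submodule.mapQ _ _
    (α.restrict (p := fixedSub ρ P) (q := fixedSub ρ₂ P)
      (fun m hm g hg => by rw [← hα, hm g hg]))
    (by
      have htr : traceKer ρ P ≤ (traceKer ρ₂ P).comap α := by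
        refine Submodule.span_le.mpr ?_
        rintro x ⟨Q, hQ, m, hm, rfl⟩
        refine Submodule.subset_span ?_
        exact ⟨Q, hQ, α m, fun g hg => by rw [← hα, hm g hg],
          map_relTrace ρ ρ₂ α hα P Q m hm⟩
      refine sup_le ?_ ?_
      · intro x hx
        refine Submodule.mem_sup_left ?_
        exact htr hx
      · intro x hx
        refine Submodule.mem_sup_right ?_
        refine Submodule.smul_induction_on hx ?_ ?_
        · intro r hr n _
          simpa only [map_smul] using
            Submodule.smul_mem_smul hr (Submodule.mem_top)
        · intro x y hx hy
          simpa only [map_add] using Submodule.add_mem _ hx hy)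

/-- Equivariant idempotent summands realize a subrepresentation. -/
def subRep (ρ : Representation O G M) (S : Submodule O M)
    (hS : ∀ g : G, ∀ x ∈ S, ρ g x ∈ S) : Representation O G ↥S where
  toFun g := (ρ g).restrict (hS g)
  map_one' := by ext x; simp [LinearMap.restrict_apply]
  map_mul' g h := by ext x; simp [LinearMap.restrict_apply]

/-- A representation is indecomposable if it is nonzero and has no nontrivial
equivariant idempotent endomorphism. -/
def IsIndecomposableRep (ρ : Representation O G M) : Prop :=
  Nontrivial M ∧ ∀ f : M →ₗ[O] M, (∀ (g : G) (m : M), f (ρ g m) = ρ g (f m)) →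
    f ∘ₗ f = f → f = 0 ∨ f = LinearMap.id

/-- The relative trace of an endomorphism, `Tr_Q^G(f) = ∑_{x ∈ G/Q} x f x⁻¹`. -/
noncomputable def relTraceEnd (ρ : Representation O G M) (Q : Subgroup G)
    (f : M →ₗ[O] M) (hf : ∀ g ∈ Q, ∀ m, f (ρ g m) = ρ g (f m)) : M →ₗ[O] M :=
  ∑ᶠ x : G ⧸ Q, Quotient.liftOn' x (fun g => ρ g ∘ₗ f ∘ₗ ρ g⁻¹) (by
    intro a b hab
    rw [QuotientGroup.leftRel_apply] at hab
    ext m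
    show ρ a (f (ρ a⁻¹ m)) = ρ b (f (ρ b⁻¹ m))
    refine Eq.symm ?_
    have hb : b = a * (a⁻¹ * b) := by group
    have h1 : ρ b⁻¹ m = ρ (a⁻¹ * b)⁻¹ (ρ a⁻¹ m) := by
      conv_lhs => rw [hb]
      rw [mul_inv_rev, map_mul, Module.End.mul_apply]
    calc ρ b (f (ρ b⁻¹ m))
        = ρ b (ρ (a⁻¹ * b)⁻¹ (f (ρ a⁻¹ m))) := by
          rw [h1, hf _ (inv_mem hab) (ρ a⁻¹ m)]
      _ = ρ a (f (ρ a⁻¹ m)) := by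
          rw [← Module.End.mul_apply, ← map_mul]
          have hba : b * (a⁻¹ * b)⁻¹ = a := by group
          rw [hba]
    )

/-- Higman's criterion as a definition of relative projectivity. -/
noncomputable def RelProjective (ρ : Representation O G M) (Q : Subgroup G) : Prop :=
  ∃ (f : M →ₗ[O] M) (hf : ∀ g ∈ Q, ∀ m, f (ρ g m) = ρ g (f m)),
    relTraceEnd ρ Q f hf = LinearMap.id

/-- `P` is a vertex of the representation. -/
noncomputable def HasVertex (ρ : Representation O G M) (P : Subgroup G) : Prop :=
  RelProjective ρ P ∧ ∀ Q : Subgroup G, RelProjective ρ Q → ¬ Q < P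

/-- The permutation representation of `G` on a `G`-set `X`. -/
def permRep (O : Type*) [CommRing O] {G : Type*} [Group G] (X : Type*) [MulAction G X] :
    Representation O G (X → O) where
  toFun g :=
    { toFun := fun f x => f (g⁻¹ • x)
      map_add' := fun f₁ f₂ => rfl
      map_smul' := fun c f => rfl }
  map_one' := by ext f x; simp
  map_mul' g h := by
    ext f x
    simp [Module.End.mul_apply, mul_smul]

/-- A representation is a permutation representation if it admits an invariant basis. -/
def IsPermRep (ρ : Representation O G M) : Prop :=
  ∃ (ι : Type) (b : Module.Basis ι O M), ∀ (g : G) (i : ι), ∃ j, ρ g (b i) = b j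

/-- A `p`-permutation representation: a direct summand of a permutation representation. -/
def IsPPermRep (ρ : Representation O G M) : Prop :=
  ∃ (W : Type) (_ : AddCommGroup W) (_ : Module O W) (ρW : Representation O G W),
    IsPermRep ρW ∧
    ∃ (i : M →ₗ[O] W) (pr : W →ₗ[O] M),
      (∀ (g : G) (m : M), i (ρ g m) = ρW g (i m)) ∧
      (∀ (g : G) (w : W), pr (ρW g w) = ρ g (pr w)) ∧
      pr ∘ₗ i = LinearMap.id

end PaperGrp

/-- The kernel of the coinvariants `k ⊗_{kZ} V`: the span of elements `z•v - v`. -/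
def coinvKer {k V : Type*} [CommRing k] [AddCommGroup V] [Module k V]
    {N : Type*} [Group N] (ρ : Representation k N V) (Z : Subgroup N) : Submodule k V :=
  Submodule.span k {x | ∃ (z : ↥Z) (v : V), x = ρ (z : N) v - v}

/-- A submodule is a subrepresentation if it is stable under the group action. -/
def IsSubrep {k V : Type*} [CommRing k] [AddCommGroup V] [Module k V]
    {N : Type*} [Group N] (ρ : Representation k N V) (S : Submodule k V) : Prop :=
  ∀ g : N, ∀ x ∈ S, ρ g x ∈ S

/-- A nonzero stable submodule with no proper nonzero stable submodules. -/
def IsSimpleSubrep {k V : Type*} [CommRing k] [AddCommGroup V] [Module k V]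
    {N : Type*} [Group N] (ρ : Representation k N V) (S : Submodule k V) : Prop :=
  IsSubrep ρ S ∧ S ≠ ⊥ ∧ ∀ S' ≤ S, IsSubrep ρ S' → S' = ⊥ ∨ S' = S

/-- The socle: the sum of all simple subrepresentations. -/
def socleRep {k V : Type*} [CommRing k] [AddCommGroup V] [Module k V]
    {N : Type*} [Group N] (ρ : Representation k N V) : Submodule k V :=
  sSup {S | IsSimpleSubrep ρ S}


section Aux

variable {k : Type*} [Field k] {N : Type*} [Group N]
variable {U : Type*} [AddCommGroup U] [Module k U]

/-- The trace map `T = ∑_{z ∈ Z} ρ z`. -/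
noncomputable def Ttr (ρ : Representation k N U) (Z : Subgroup N) [Fintype ↥Z] :
    U →ₗ[k] U :=
  ∑ z : ↥Z, (ρ (z : N))

variable (ρ : Representation k N U) (Z : Subgroup N)

lemma Ttr_apply [Fintype ↥Z] (u : U) : Ttr ρ Z u = ∑ z : ↥Z, ρ (z : N) u := by
  simp [Ttr]

lemma rho_comp_Ttr [Fintype ↥Z] (z : ↥Z) : ρ (z : N) ∘ₗ Ttr ρ Z = Ttr ρ Z := by
  ext u
  simp only [LinearMap.comp_apply, Ttr_apply, map_sum]
  refine Fintype.sum_bijective (Equiv.mulLeft z) (Equiv.bijective _) _ _ (fun w => ?_)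
  show ρ (z : N) (ρ (w : N) u) = ρ (((z * w : ↥Z) : N)) u
  rw [Subgroup.coe_mul, map_mul]
  rfl

lemma Ttr_comp_rho [Fintype ↥Z] (z : ↥Z) : Ttr ρ Z ∘ₗ ρ (z : N) = Ttr ρ Z := by
  ext u
  simp only [LinearMap.comp_apply, Ttr_apply]
  refine Fintype.sum_bijective (Equiv.mulRight z) (Equiv.bijective _) _ _ (fun w => ?_)
  show ρ (w : N) (ρ (z : N) u) = ρ (((w * z : ↥Z) : N)) u
  rw [Subgroup.coe_mul, map_mul]
  rfl

lemma Ttr_equivariant [Fintype ↥Z] [Z.Normal] (g : N) :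
    Ttr ρ Z ∘ₗ ρ g = ρ g ∘ₗ Ttr ρ Z := by
  have hZ : Z.Normal := inferInstance
  ext u
  simp only [LinearMap.comp_apply, Ttr_apply, map_sum]
  let e : ↥Z ≃ ↥Z :=
    { toFun := fun z => ⟨g⁻¹ * (z : N) * g, by
        have := hZ.conj_mem (z : N) z.2 g⁻¹
        rwa [inv_inv] at this⟩
      invFun := fun z => ⟨g * (z : N) * g⁻¹, hZ.conj_mem (z : N) z.2 g⟩
      left_inv := fun z => by ext; simp; group
      right_inv := fun z => by ext; simp; group }
  refine Fintype.sum_bijective e (Equiv.bijective _) _ _ (fun z => ?_)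
  show ρ (z : N) (ρ g u) = ρ g (ρ (g⁻¹ * (z : N) * g) u)
  rw [← Module.End.mul_apply, ← map_mul, ← Module.End.mul_apply, ← map_mul]
  congr 1
  group

lemma mem_fixedSub {m : U} : m ∈ PaperGrp.fixedSub ρ Z ↔ ∀ g ∈ Z, ρ g m = m := Iff.rfl

lemma fixedSub_subrep [Z.Normal] : IsSubrep ρ (PaperGrp.fixedSub ρ Z) := by
  have hZ : Z.Normal := inferInstance
  intro g x hx z hz
  have h1 : g⁻¹ * z * g ∈ Z := by
    have := hZ.conj_mem z hz g⁻¹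
    rwa [inv_inv] at this
  have h2 : ρ (g⁻¹ * z * g) x = x := hx _ h1
  calc ρ z (ρ g x) = ρ g (ρ (g⁻¹ * z * g) x) := by
        rw [← Module.End.mul_apply, ← map_mul, ← Module.End.mul_apply, ← map_mul]
        congr 1
        group
    _ = ρ g x := by rw [h2]

/-- Regrouping Higman's criterion over `⊥` into one over `Z`. -/
lemma exists_f' [Fintype N] [Fintype ↥Z] [Fintype (N ⧸ Z)]
    [Fintype (N ⧸ (⊥ : Subgroup N))] [Z.Normal]
    (hproj : PaperGrp.RelProjective ρ (⊥ : Subgroup N)) :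
    ∃ f' : U →ₗ[k] U,
      ∑ z : ↥Z, ρ (z : N) ∘ₗ f' ∘ₗ ρ ((z : N)⁻¹) = LinearMap.id := by
  have hZ : Z.Normal := inferInstance
  obtain ⟨f, hf, hrel⟩ := hproj
  refine ⟨∑ q : N ⧸ Z, ρ q.out ∘ₗ f ∘ₗ ρ q.out⁻¹, ?_⟩
  have h1 : ∑ g : N, (ρ g ∘ₗ f ∘ₗ ρ g⁻¹) = LinearMap.id := by
    rw [← hrel]
    unfold PaperGrp.relTraceEnd
    rw [finsum_eq_sum_of_fintype]
    refine Fintype.sum_bijective (QuotientGroup.mk) ⟨?_, ?_⟩ _ _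
      (fun g => rfl)
    · intro a b hab
      have h := QuotientGroup.eq.mp hab
      rw [Subgroup.mem_bot] at h
      exact (inv_mul_eq_one.mp h)
    · exact QuotientGroup.mk_surjective
  -- the equivalence Z × N⧸Z ≃ N
  have hsec : ∀ g : N, g * ((QuotientGroup.mk g : N ⧸ Z)).out⁻¹ ∈ Z := by
    intro g
    have h : (QuotientGroup.mk ((QuotientGroup.mk g : N ⧸ Z).out) : N ⧸ Z)
        = QuotientGroup.mk g := QuotientGroup.out_eq' _
    have h2 : ((QuotientGroup.mk g : N ⧸ Z).out)⁻¹ * g ∈ Z := QuotientGroup.eq.mp h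
    have h3 := hZ.conj_mem _ h2 g
    have : g * ((QuotientGroup.mk g : N ⧸ Z).out)⁻¹
        = g * (((QuotientGroup.mk g : N ⧸ Z).out)⁻¹ * g) * g⁻¹ := by group
    rwa [this]
  let e : ↥Z × (N ⧸ Z) ≃ N :=
    { toFun := fun wq => (wq.1 : N) * wq.2.out
      invFun := fun g => (⟨g * ((QuotientGroup.mk g : N ⧸ Z)).out⁻¹, hsec g⟩,
        QuotientGroup.mk g)
      left_inv := by
        rintro ⟨w, q⟩
        have hmkw : (QuotientGroup.mk (w : N) : N ⧸ Z) = 1 :=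
          (QuotientGroup.eq_one_iff _).mpr w.2
        have hmk : (QuotientGroup.mk ((w : N) * q.out) : N ⧸ Z) = q := by
          rw [QuotientGroup.mk_mul, hmkw, one_mul, QuotientGroup.out_eq']
        ext
        · simp only [hmk]
          group
        · simp [hmk]
      right_inv := fun g => by
        simp only []
        group }
  rw [← h1]
  symm
  calc ∑ g : N, ρ g ∘ₗ f ∘ₗ ρ g⁻¹
      = ∑ wq : ↥Z × (N ⧸ Z), ρ (e wq) ∘ₗ f ∘ₗ ρ (e wq)⁻¹ :=
        (Fintype.sum_bijective e e.bijective _ _ (fun wq => rfl)).symm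
    _ = ∑ w : ↥Z, ∑ q : N ⧸ Z, ρ ((w : N) * q.out) ∘ₗ f ∘ₗ ρ ((w : N) * q.out)⁻¹ :=
        Fintype.sum_prod_type _
    _ = ∑ z : ↥Z, ρ (z : N) ∘ₗ (∑ q : N ⧸ Z, ρ q.out ∘ₗ f ∘ₗ ρ q.out⁻¹)
          ∘ₗ ρ ((z : N)⁻¹) := by
        refine Finset.sum_congr rfl (fun w _ => ?_)
        ext u
        simp [LinearMap.sum_apply, map_mul, mul_inv_rev, map_sum, Module.End.mul_apply]

variable {f' : U →ₗ[k] U}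

lemma range_Ttr [Fintype ↥Z]
    (hf' : ∑ z : ↥Z, ρ (z : N) ∘ₗ f' ∘ₗ ρ ((z : N)⁻¹) = LinearMap.id) :
    LinearMap.range (Ttr ρ Z) = PaperGrp.fixedSub ρ Z := by
  apply le_antisymm
  · rintro _ ⟨u, rfl⟩
    intro g hg
    exact LinearMap.congr_fun (rho_comp_Ttr ρ Z ⟨g, hg⟩) u
  · intro u hu
    refine ⟨f' u, ?_⟩
    have h0 := LinearMap.congr_fun hf' u
    simp only [LinearMap.sum_apply, LinearMap.comp_apply, LinearMap.id_apply] at h0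
    rw [Ttr_apply]
    calc ∑ z : ↥Z, ρ (z : N) (f' u)
        = ∑ z : ↥Z, ρ (z : N) (f' (ρ ((z : N)⁻¹) u)) := by
          refine Finset.sum_congr rfl (fun z _ => ?_)
          rw [hu ((z : N)⁻¹) (inv_mem z.2)]
      _ = u := h0

lemma ker_Ttr [Fintype ↥Z]
    (hf' : ∑ z : ↥Z, ρ (z : N) ∘ₗ f' ∘ₗ ρ ((z : N)⁻¹) = LinearMap.id) :
    LinearMap.ker (Ttr ρ Z) = coinvKer ρ Z := by
  apply le_antisymm
  · -- ker ⊆ coinvKer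
    intro u hu
    rw [LinearMap.mem_ker] at hu
    have hq : ∀ (z : ↥Z) (v : U),
        Submodule.Quotient.mk (p := coinvKer ρ Z) (ρ (z : N) v)
          = Submodule.Quotient.mk v := by
      intro z v
      rw [Submodule.Quotient.eq]
      exact Submodule.subset_span ⟨z, v, rfl⟩
    have h0 := LinearMap.congr_fun hf' u
    simp only [LinearMap.sum_apply, LinearMap.comp_apply, LinearMap.id_apply] at h0
    have h4 : ∑ z : ↥Z, ρ ((z : N)⁻¹) u = Ttr ρ Z u := by
      rw [Ttr_apply]
      refine Fintype.sum_bijective (Equiv.inv ↥Z) (Equiv.bijective _) _ _ (fun z => ?_)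
      show ρ ((z : N)⁻¹) u = ρ (((z⁻¹ : ↥Z) : N)) u
      rfl
    have hq : ∀ (z : ↥Z) (v : U),
        (coinvKer ρ Z).mkQ (ρ (z : N) v) = (coinvKer ρ Z).mkQ v := by
      intro z v
      simp only [Submodule.mkQ_apply]
      rw [Submodule.Quotient.eq]
      exact Submodule.subset_span ⟨z, v, rfl⟩
    have h1 : (coinvKer ρ Z).mkQ u = 0 := by
      rw [← h0, map_sum]
      calc ∑ z : ↥Z, (coinvKer ρ Z).mkQ (ρ (z : N) (f' (ρ ((z : N)⁻¹) u)))
          = ∑ z : ↥Z, (coinvKer ρ Z).mkQ (f' (ρ ((z : N)⁻¹) u)) :=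
            Finset.sum_congr rfl (fun z _ => hq z _)
        _ = (coinvKer ρ Z).mkQ (f' (∑ z : ↥Z, ρ ((z : N)⁻¹) u)) := by
            rw [map_sum f', map_sum]
        _ = 0 := by rw [h4, hu, map_zero, map_zero]
    have := LinearMap.mem_ker.mpr h1
    rwa [Submodule.ker_mkQ] at this
  · -- coinvKer ⊆ ker
    rw [coinvKer]
    rw [Submodule.span_le]
    rintro x ⟨z, v, rfl⟩
    simp only [SetLike.mem_coe, LinearMap.mem_ker, map_sub]
    rw [show (Ttr ρ Z) ((ρ (z : N)) v) = Ttr ρ Z v from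
      LinearMap.congr_fun (Ttr_comp_rho ρ Z z) v, sub_self]

end Aux

section PGroupAux

variable {k : Type*} [Field k] {N : Type*} [Group N]
variable {U : Type*} [AddCommGroup U] [Module k U]

lemma exists_fixed_vector {p : ℕ} [Fact p.Prime] [CharP k p]
    (ρ : Representation k N U) (Z : Subgroup N) [Finite ↥Z] (hZp : IsPGroup p ↥Z)
    (S : Submodule k U) (hS : IsSubrep ρ S) {v : U} (hv : v ∈ S) (hv0 : v ≠ 0) :
    ∃ w, w ∈ S ∧ w ≠ 0 ∧ ∀ z : ↥Z, ρ (z : N) w = w := by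
  classical
  letI : Algebra (ZMod p) k := ZMod.algebra k p
  letI : Module (ZMod p) U := Module.compHom U (algebraMap (ZMod p) k)
  have hsmul : ∀ (c : ZMod p) (x : U), c • x = (algebraMap (ZMod p) k c) • x :=
    fun c x => rfl
  set orb : Set U := Set.range (fun z : ↥Z => ρ (z : N) v) with horb
  set W : Submodule (ZMod p) U := Submodule.span (ZMod p) orb with hW
  haveI : Module.Finite (ZMod p) W := Module.Finite.span_of_finite _ (Set.finite_range _)
  haveI : Finite W := Module.finite_of_finite (ZMod p)
  -- stability of W under Z
  have hstab : ∀ z : ↥Z, ∀ w ∈ W, ρ (z : N) w ∈ W := by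
    intro z w hw
    induction hw using Submodule.span_induction with
    | mem x hx =>
        obtain ⟨z', rfl⟩ := hx
        refine Submodule.subset_span ⟨z * z', ?_⟩
        show ρ ((z * z' : ↥Z) : N) v = ρ (z : N) (ρ (z' : N) v)
        rw [Subgroup.coe_mul, map_mul]
        rfl
    | zero => simp
    | add x y _ _ hx hy => rw [map_add]; exact Submodule.add_mem _ hx hy
    | smul c x _ hx =>
        rw [hsmul, map_smul, ← hsmul]
        exact Submodule.smul_mem _ c hx
  -- W ⊆ S
  have hWS : (W : Set U) ⊆ S := by
    intro w hw
    induction hw using Submodule.span_induction with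
    | mem x hx =>
        obtain ⟨z', rfl⟩ := hx
        exact hS _ _ hv
    | zero => exact Submodule.zero_mem S
    | add x y _ _ hx hy => exact Submodule.add_mem _ hx hy
    | smul c x _ hx => rw [hsmul]; exact Submodule.smul_mem _ _ hx
  -- action of Z on W
  letI act : MulAction ↥Z ↥W :=
    { smul := fun z w => ⟨ρ (z : N) w, hstab z w w.2⟩
      one_smul := fun w => by
        ext
        show ρ ((1 : ↥Z) : N) w = w
        simp
      mul_smul := fun z z' w => by
        ext
        show ρ ((z * z' : ↥Z) : N) w = ρ (z : N) (ρ (z' : N) (w : U))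
        rw [Subgroup.coe_mul, map_mul]
        rfl }
  have hsmul_def : ∀ (z : ↥Z) (w : ↥W), ((z • w : ↥W) : U) = ρ (z : N) w :=
    fun z w => rfl
  -- v ∈ W and v ≠ 0, so W is nontrivial
  have hvW : v ∈ W := Submodule.subset_span ⟨1, by simp⟩
  haveI : Nontrivial W := ⟨⟨⟨v, hvW⟩, 0, by
    intro h
    exact hv0 (by simpa using congrArg Subtype.val h)⟩⟩
  -- p divides the cardinality of W
  haveI : NeZero p := ⟨(Fact.out (p := p.Prime)).ne_zero⟩
  haveI : Fintype W := Fintype.ofFinite _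
  have hcard : p ∣ Nat.card ↥W := by
    rw [Nat.card_eq_fintype_card]
    have h := Module.card_eq_pow_finrank (K := ZMod p) (V := ↥W)
    rw [ZMod.card] at h
    rw [h]
    refine dvd_pow_self p ?_
    intro h0
    rw [h0, pow_zero] at h
    exact (Fintype.one_lt_card (α := ↥W)).ne' h
  -- fixed point other than 0
  have h0fix : (0 : ↥W) ∈ MulAction.fixedPoints ↥Z ↥W := by
    intro z
    ext
    show ρ (z : N) (0 : U) = 0
    simp
  obtain ⟨b, hbfix, hb0⟩ :=
    hZp.exists_fixed_point_of_prime_dvd_card_of_fixed_point (α := ↥W) hcard h0fix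
  refine ⟨(b : U), hWS b.2, ?_, ?_⟩
  · intro h
    exact hb0 (by ext; simp [h])
  · intro z
    have := hbfix z
    exact congrArg Subtype.val this

end PGroupAux

/-- Let `k` be a field of characteristic `p`, `N` a finite group, `Z` a
normal `p`-subgroup of `N`, and `U` a projective indecomposable `kN`-module such that the
coinvariants `k ⊗_{kZ} U` form a simple `kN`-module.  Then the `Z`-fixed points `U^Z`
coincide with the socle of `U`, and in particular `U^Z` is a simple `kN`-module. -/
theorem fixed_points_eq_socle
    (k : Type*) [Field k] (p : ℕ) [Fact p.Prime] [CharP k p]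
    (N : Type*) [Group N] [Finite N]
    (Z : Subgroup N) [Z.Normal] (hZp : IsPGroup p ↥Z)
    (U : Type*) [AddCommGroup U] [Module k U] [Module.Finite k U]
    (ρ : Representation k N U)
    (hproj : PaperGrp.RelProjective ρ ⊥)
    (hindec : PaperGrp.IsIndecomposableRep ρ)
    (hquot_ne : coinvKer ρ Z ≠ ⊤)
    (hsimple : ∀ S : Submodule k U, coinvKer ρ Z ≤ S → IsSubrep ρ S →
      S = coinvKer ρ Z ∨ S = ⊤) :
    PaperGrp.fixedSub ρ Z = socleRep ρ ∧ IsSimpleSubrep ρ (PaperGrp.fixedSub ρ Z) := by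
  classical
  letI : Fintype N := Fintype.ofFinite _
  letI : Fintype ↥Z := Fintype.ofFinite _
  letI : Fintype (N ⧸ Z) := Fintype.ofFinite _
  letI : Fintype (N ⧸ (⊥ : Subgroup N)) := Fintype.ofFinite _
  obtain ⟨f', hf'⟩ := exists_f' ρ Z hproj
  have hrange := range_Ttr ρ Z hf'
  have hker := ker_Ttr ρ Z hf'
  have hsubrep : IsSubrep ρ (PaperGrp.fixedSub ρ Z) := fixedSub_subrep ρ Z
  have hne : PaperGrp.fixedSub ρ Z ≠ ⊥ := by
    intro h
    apply hquot_ne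
    have hT0 : Ttr ρ Z = 0 := LinearMap.range_eq_bot.mp (by rw [hrange, h])
    rw [← hker, hT0, LinearMap.ker_zero]
  have hsimp : IsSimpleSubrep ρ (PaperGrp.fixedSub ρ Z) := by
    refine ⟨hsubrep, hne, ?_⟩
    intro S' hle hsub
    set W := Submodule.comap (Ttr ρ Z) S' with hWdef
    have hWsub : IsSubrep ρ W := by
      intro g x hx
      have hx' : Ttr ρ Z x ∈ S' := hx
      show Ttr ρ Z (ρ g x) ∈ S'
      rw [show Ttr ρ Z (ρ g x) = ρ g (Ttr ρ Z x) from
        LinearMap.congr_fun (Ttr_equivariant ρ Z g) x]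
      exact hsub g _ hx'
    have hWker : coinvKer ρ Z ≤ W := by
      intro x hx
      show Ttr ρ Z x ∈ S'
      rw [← hker] at hx
      rw [LinearMap.mem_ker.mp hx]
      exact Submodule.zero_mem _
    rcases hsimple W hWker hWsub with h | h
    · left
      refine (Submodule.eq_bot_iff _).mpr (fun s hs => ?_)
      have hsfix : s ∈ LinearMap.range (Ttr ρ Z) := by rw [hrange]; exact hle hs
      obtain ⟨u, rfl⟩ := hsfix
      have hu : u ∈ W := hs
      rw [h, ← hker] at hu
      exact LinearMap.mem_ker.mp hu
    · right
      refine le_antisymm hle ?_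
      intro m hm
      rw [← hrange] at hm
      obtain ⟨u, rfl⟩ := hm
      have hu : u ∈ W := by rw [h]; trivial
      exact hu
  refine ⟨?_, hsimp⟩
  unfold socleRep
  refine le_antisymm (le_sSup (show _ ∈ {S | IsSimpleSubrep ρ S} from hsimp))
    (sSup_le (fun S hS => ?_))
  obtain ⟨hSsub, hSne, hSmin⟩ := hS
  obtain ⟨v, hv, hv0⟩ := Submodule.ne_bot_iff _ |>.mp hSne
  obtain ⟨w, hwS, hw0, hwfix⟩ := exists_fixed_vector ρ Z hZp S hSsub hv hv0
  have hS'sub : IsSubrep ρ (S ⊓ PaperGrp.fixedSub ρ Z) := fun g x hx =>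
    ⟨hSsub g x hx.1, hsubrep g x hx.2⟩
  rcases hSmin _ inf_le_left hS'sub with h | h
  · exfalso
    have hwmem : w ∈ S ⊓ PaperGrp.fixedSub ρ Z :=
      ⟨hwS, fun g hg => hwfix ⟨g, hg⟩⟩
    rw [h] at hwmem
    exact hw0 (by simpa using hwmem)
  · exact inf_eq_left.mp h
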